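/- A subset P ⊆ ℝ^n is a polyhedron (i.e., P = {x ∈ ℝ^n : Ax ≤ b} for some matrix A ∈ ℝ^{m×n} and vector b ∈ ℝ^m) if and only if P is the Minkowski sum of a polytope and a finitely generated cone, i.e., P = conv(V) + ccone(W) for some finite sets V, W ⊆ ℝ^n (Weyl–Minkowski theorem). -/

import Mathlib

open scoped Pointwise

open Matrix

/-- The convex hull of a finite set `V ⊆ ℝ^n`:
`conv(V) = {∑_{v∈V} λ_v • v : λ_v ≥ 0, ∑_{v∈V} λ_v = 1}` (so `conv(∅) = ∅`). -/
def convFin {n : ℕ} (V : Finset (Fin n → ℝ)) : Set (Fin n → ℝ) :=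
  {y | ∃ lam : (Fin n → ℝ) → ℝ, (∀ v ∈ V, 0 ≤ lam v) ∧ (∑ v ∈ V, lam v = 1) ∧
    y = ∑ v ∈ V, lam v • v}

/-- The conic hull of a finite set `W ⊆ ℝ^n` (so `ccone(∅) = {0}`). -/
def ccone {n : ℕ} (W : Finset (Fin n → ℝ)) : Set (Fin n → ℝ) :=
  {y | ∃ lam : (Fin n → ℝ) → ℝ, (∀ w ∈ W, 0 ≤ lam w) ∧ y = ∑ w ∈ W, lam w • w}

def polyCone {n : ℕ} (U : Finset (Fin n → ℝ)) : Set (Fin n → ℝ) :=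
  {x | ∀ u ∈ U, u ⬝ᵥ x ≤ 0}

lemma zero_mem_ccone {n : ℕ} (W : Finset (Fin n → ℝ)) : 0 ∈ ccone W :=
  ⟨0, fun _ _ => le_refl 0, by simp⟩

lemma mem_ccone_of_mem {n : ℕ} {W : Finset (Fin n → ℝ)} {w : Fin n → ℝ} (hw : w ∈ W) :
    w ∈ ccone W := by
  classical
  refine ⟨fun v => if v = w then 1 else 0, fun v _ => by positivity, ?_⟩
  rw [Finset.sum_congr rfl (fun v _ => by rw [ite_smul, one_smul, zero_smul])]
  simp [Finset.sum_ite_eq' W w, hw]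

lemma ccone_add_mem {n : ℕ} {W : Finset (Fin n → ℝ)} {x y : Fin n → ℝ}
    (hx : x ∈ ccone W) (hy : y ∈ ccone W) : x + y ∈ ccone W := by
  obtain ⟨l1, hl1, he1⟩ := hx
  obtain ⟨l2, hl2, he2⟩ := hy
  refine ⟨l1 + l2, fun w hw => add_nonneg (hl1 w hw) (hl2 w hw), ?_⟩
  rw [he1, he2, ← Finset.sum_add_distrib]
  exact Finset.sum_congr rfl fun w _ => by rw [Pi.add_apply, add_smul]

lemma ccone_smul_mem {n : ℕ} {W : Finset (Fin n → ℝ)} {x : Fin n → ℝ} {c : ℝ}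
    (hc : 0 ≤ c) (hx : x ∈ ccone W) : c • x ∈ ccone W := by
  obtain ⟨l, hl, he⟩ := hx
  refine ⟨fun w => c * l w, fun w hw => mul_nonneg hc (hl w hw), ?_⟩
  rw [he, Finset.smul_sum]
  exact Finset.sum_congr rfl fun w _ => smul_smul c (l w) w

lemma ccone_sum_smul_mem {n : ℕ} {W : Finset (Fin n → ℝ)} {ι : Type*} {s : Finset ι}
    {c : ι → ℝ} {f : ι → Fin n → ℝ} (hc : ∀ i ∈ s, 0 ≤ c i) (hf : ∀ i ∈ s, f i ∈ ccone W) :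
    (∑ i ∈ s, c i • f i) ∈ ccone W :=
  Finset.sum_induction _ (· ∈ ccone W) (fun _ _ ha hb => ccone_add_mem ha hb)
    (zero_mem_ccone W) (fun i hi => ccone_smul_mem (hc i hi) (hf i hi))

lemma ccone_insert {n : ℕ} {w : Fin n → ℝ} {W : Finset (Fin n → ℝ)} (hw : w ∉ W) (x) :
    x ∈ ccone (insert w W) ↔ ∃ t : ℝ, 0 ≤ t ∧ x - t • w ∈ ccone W := by
  classical
  constructor
  · rintro ⟨lam, hlam, he⟩
    refine ⟨lam w, hlam w (Finset.mem_insert_self _ _), lam, fun v hv =>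
      hlam v (Finset.mem_insert_of_mem hv), ?_⟩
    rw [he, Finset.sum_insert hw]
    abel
  · rintro ⟨t, ht, lam, hlam, he⟩
    refine ⟨fun v => if v = w then t else lam v, fun v hv => ?_, ?_⟩
    · dsimp only
      by_cases hvw : v = w
      · rw [if_pos hvw]; exact ht
      · rw [if_neg hvw]
        exact hlam v ((Finset.mem_insert.mp hv).resolve_left hvw)
    · dsimp only
      rw [Finset.sum_insert hw, if_pos rfl]
      have : ∑ v ∈ W, (if v = w then t else lam v) • v = ∑ v ∈ W, lam v • v :=
        Finset.sum_congr rfl fun v hv => by rw [if_neg (ne_of_mem_of_not_mem hv hw)]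
      rw [this]
      have := sub_eq_iff_eq_add.mp he
      rw [this]; abel

lemma fm_core {ι : Type*} (s : Finset ι) (c d : ι → ℝ) :
    (∃ t : ℝ, 0 ≤ t ∧ ∀ i ∈ s, d i + t * c i ≤ 0) ↔
      ((∀ i ∈ s, 0 ≤ c i → d i ≤ 0) ∧
        ∀ i ∈ s, ∀ j ∈ s, 0 < c i → c j < 0 → c i * d j - c j * d i ≤ 0) := by
  classical
  constructor
  · rintro ⟨t, ht, h⟩
    refine ⟨fun i hi hci => ?_, fun i hi j hj hci hcj => ?_⟩
    · have := h i hi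
      nlinarith
    · have h1 := h i hi
      have h2 := h j hj
      nlinarith
  · rintro ⟨h1, h2⟩
    set T : Finset ℝ := insert (0:ℝ) ((s.filter fun i => c i < 0).image fun i => -d i / c i)
      with hT
    have hTne : T.Nonempty := ⟨0, Finset.mem_insert_self _ _⟩
    refine ⟨T.max' hTne, T.le_max' 0 (Finset.mem_insert_self _ _), fun i hi => ?_⟩
    set t := T.max' hTne with htdef
    rcases lt_trichotomy (c i) 0 with hc | hc | hc
    · -- lower bound satisfied since t ≥ -d i / c i
      have hmem : -d i / c i ∈ T := Finset.mem_insert_of_mem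
        (Finset.mem_image_of_mem _ (Finset.mem_filter.mpr ⟨hi, hc⟩))
      have hle : -d i / c i ≤ t := T.le_max' _ hmem
      have := mul_le_mul_of_nonpos_right hle hc.le
      rw [div_mul_cancel₀ _ hc.ne] at this
      linarith
    · have := h1 i hi hc.ge
      rw [hc]; linarith
    · -- t is an element of T; every element of T is ≤ -d i / c i
      have hmax : t ∈ T := T.max'_mem hTne
      have hub : t ≤ -d i / c i := by
        rw [hT] at hmax
        rcases Finset.mem_insert.mp hmax with h0 | himg
        · rw [h0]
          exact div_nonneg (neg_nonneg.mpr (h1 i hi hc.le)) hc.le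
        · obtain ⟨j, hj, hje⟩ := Finset.mem_image.mp himg
          obtain ⟨hjs, hcj⟩ := Finset.mem_filter.mp hj
          rw [← hje]
          have hkey := h2 i hi j hjs hc hcj
          have hcj' : (0:ℝ) < -c j := by linarith
          rw [show -d j / c j = d j / (-c j) by rw [div_neg, neg_div],
            div_le_div_iff₀ hcj' hc]
          nlinarith
      have := mul_le_mul_of_nonneg_right hub hc.le
      rw [div_mul_cancel₀ _ hc.ne'] at this
      linarith

theorem cone_weyl {n : ℕ} (W : Finset (Fin n → ℝ)) :
    ∃ U : Finset (Fin n → ℝ), ccone W = polyCone U := by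
  classical
  induction W using Finset.induction_on with
  | empty =>
    refine ⟨(Finset.univ.image fun i : Fin n => Pi.single i (1:ℝ)) ∪
      (Finset.univ.image fun i : Fin n => -Pi.single i (1:ℝ)), ?_⟩
    ext x
    simp only [ccone, polyCone, Set.mem_setOf_eq, Finset.sum_empty, Finset.mem_union,
      Finset.mem_image, Finset.mem_univ, true_and]
    constructor
    · rintro ⟨lam, -, rfl⟩ u hu
      rcases hu with ⟨i, rfl⟩ | ⟨i, rfl⟩ <;> simp [single_dotProduct]
    · intro h
      refine ⟨0, fun _ _ => le_refl 0, funext fun i => ?_⟩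
      have h1 := h _ (Or.inl ⟨i, rfl⟩)
      have h2 := h _ (Or.inr ⟨i, rfl⟩)
      rw [single_dotProduct, one_mul] at h1
      rw [neg_dotProduct, single_dotProduct, one_mul] at h2
      simp only [Pi.zero_apply]
      linarith
  | @insert w W hw ih =>
    obtain ⟨U, hU⟩ := ih
    set c : (Fin n → ℝ) → ℝ := fun u => -(u ⬝ᵥ w) with hc
    refine ⟨(U.filter fun u => 0 ≤ c u) ∪
      (((U ×ˢ U).filter fun p => 0 < c p.1 ∧ c p.2 < 0).image fun p =>
        c p.1 • p.2 - c p.2 • p.1), ?_⟩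
    ext x
    rw [Set.ext_iff] at hU
    constructor
    · intro hx
      obtain ⟨t, ht, hmem⟩ := (ccone_insert hw x).mp hx
      have hpc := (hU _).mp hmem
      have hfm : ∀ u ∈ U, u ⬝ᵥ x + t * c u ≤ 0 := by
        intro u hu
        have := hpc u hu
        rw [dotProduct_sub, dotProduct_smul, smul_eq_mul] at this
        rw [hc]; ring_nf; ring_nf at this; linarith
      have := (fm_core U c (fun u => u ⬝ᵥ x)).mp ⟨t, ht, hfm⟩
      obtain ⟨h1, h2⟩ := this
      intro u hu
      rcases Finset.mem_union.mp hu with h | h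
      · obtain ⟨huU, hcu⟩ := Finset.mem_filter.mp h
        exact h1 u huU hcu
      · obtain ⟨p, hp, rfl⟩ := Finset.mem_image.mp h
        obtain ⟨hpU, hp1, hp2⟩ := Finset.mem_filter.mp hp
        obtain ⟨hU1, hU2⟩ := Finset.mem_product.mp hpU
        have := h2 p.1 hU1 p.2 hU2 hp1 hp2
        rw [sub_dotProduct, smul_dotProduct, smul_dotProduct, smul_eq_mul, smul_eq_mul]
        linarith
    · intro hx
      refine (ccone_insert hw x).mpr ?_
      have h1 : ∀ u ∈ U, 0 ≤ c u → u ⬝ᵥ x ≤ 0 := by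
        intro u hu hcu
        exact hx u (Finset.mem_union_left _ (Finset.mem_filter.mpr ⟨hu, hcu⟩))
      have h2 : ∀ i ∈ U, ∀ j ∈ U, 0 < c i → c j < 0 → c i * (j ⬝ᵥ x) - c j * (i ⬝ᵥ x) ≤ 0 := by
        intro i hi j hj hci hcj
        have := hx (c i • j - c j • i) (Finset.mem_union_right _ (Finset.mem_image.mpr
          ⟨(i, j), Finset.mem_filter.mpr ⟨Finset.mem_product.mpr ⟨hi, hj⟩, hci, hcj⟩, rfl⟩))
        rw [sub_dotProduct, smul_dotProduct, smul_dotProduct, smul_eq_mul, smul_eq_mul] at this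
        linarith
      obtain ⟨t, ht, hfm⟩ := (fm_core U c (fun u => u ⬝ᵥ x)).mpr ⟨h1, h2⟩
      refine ⟨t, ht, (hU _).mpr fun u hu => ?_⟩
      have := hfm u hu
      rw [dotProduct_sub, dotProduct_smul, smul_eq_mul]
      rw [hc] at this; ring_nf; ring_nf at this; linarith

def toE {n : ℕ} (x : Fin n → ℝ) : EuclideanSpace ℝ (Fin n) := WithLp.toLp 2 x

lemma dotProduct_eq_inner {n : ℕ} (u y : Fin n → ℝ) :
    u ⬝ᵥ y = (inner ℝ (toE u) (toE y) : ℝ) := by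
  rw [PiLp.inner_apply]
  simp only [RCLike.inner_apply, starRingEnd_apply, star_trivial]
  exact Finset.sum_congr rfl fun i _ => mul_comm (u i) (y i)

lemma sum_dot {n : ℕ} {ι : Type*} (s : Finset ι) (f : ι → Fin n → ℝ) (x : Fin n → ℝ) :
    (∑ i ∈ s, f i) ⬝ᵥ x = ∑ i ∈ s, f i ⬝ᵥ x := by
  simp only [dotProduct, Finset.sum_apply, Finset.sum_mul]
  exact Finset.sum_comm

lemma dotProduct_ccone_nonpos {n : ℕ} {W : Finset (Fin n → ℝ)} {x y : Fin n → ℝ}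
    (hy : y ∈ ccone W) (h : ∀ w ∈ W, w ⬝ᵥ x ≤ 0) : y ⬝ᵥ x ≤ 0 := by
  obtain ⟨lam, hlam, rfl⟩ := hy
  rw [sum_dot]
  refine Finset.sum_nonpos fun w hw => ?_
  rw [smul_dotProduct, smul_eq_mul]
  exact mul_nonpos_of_nonneg_of_nonpos (hlam w hw) (h w hw)

lemma farkas {n : ℕ} (T : Finset (Fin n → ℝ)) {x : Fin n → ℝ} (hx : x ∉ ccone T) :
    ∃ y : Fin n → ℝ, (∀ t ∈ T, t ⬝ᵥ y ≤ 0) ∧ 0 < x ⬝ᵥ y := by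
  obtain ⟨T', hT'⟩ := cone_weyl T
  have hclosed : IsClosed {y : EuclideanSpace ℝ (Fin n) | WithLp.ofLp y ∈ ccone T} := by
    rw [hT']
    have : {y : EuclideanSpace ℝ (Fin n) | WithLp.ofLp y ∈ polyCone T'} =
        ⋂ u ∈ T', {y : EuclideanSpace ℝ (Fin n) | (inner ℝ (toE u) y : ℝ) ≤ 0} := by
      ext y
      simp only [polyCone, Set.mem_setOf_eq, Set.mem_iInter]
      exact forall₂_congr fun u _ => by rw [dotProduct_eq_inner]; rfl
    rw [this]
    exact isClosed_biInter fun u _ =>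
      isClosed_le (Continuous.inner continuous_const continuous_id) continuous_const
  let K : ProperCone ℝ (EuclideanSpace ℝ (Fin n)) :=
    { carrier := {y : EuclideanSpace ℝ (Fin n) | WithLp.ofLp y ∈ ccone T}
      zero_mem' := zero_mem_ccone T
      smul_mem' := fun c y hy => ccone_smul_mem c.2 hy
      add_mem' := fun hy hz => ccone_add_mem hy hz
      isClosed' := hclosed }
  obtain ⟨y, hy1, hy2⟩ :=
    K.hyperplane_separation' (x₀ := toE x) hx
  refine ⟨-y, fun t ht => ?_, ?_⟩
  · rw [dotProduct_eq_inner]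
    have h1 : (inner ℝ (toE t) (toE (-y)) : ℝ) = -(inner ℝ (toE t) y : ℝ) := inner_neg_right _ _
    rw [h1]
    linarith [hy1 (toE t) (mem_ccone_of_mem ht)]
  · rw [dotProduct_eq_inner]
    have h1 : (inner ℝ (toE x) (toE (-y)) : ℝ) = -(inner ℝ (toE x) y : ℝ) := inner_neg_right _ _
    rw [h1]
    have h2 : (inner ℝ y (toE x) : ℝ) = (inner ℝ (toE x) y : ℝ) := real_inner_comm _ _
    linarith [hy2]

theorem cone_minkowski {n : ℕ} (U : Finset (Fin n → ℝ)) :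
    ∃ W : Finset (Fin n → ℝ), polyCone U = ccone W := by
  obtain ⟨U', hU'⟩ := cone_weyl U
  refine ⟨U', Set.Subset.antisymm ?_ ?_⟩
  · intro x hx
    by_contra hnot
    obtain ⟨y, hy1, hy2⟩ := farkas U' hnot
    have hyU : y ∈ ccone U := by
      rw [hU']; exact fun u hu => hy1 u hu
    have : y ⬝ᵥ x ≤ 0 := dotProduct_ccone_nonpos hyU hx
    rw [dotProduct_comm] at this
    linarith
  · intro y hy u hu
    have hu' : u ∈ polyCone U' := hU' ▸ mem_ccone_of_mem hu
    rw [dotProduct_comm]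
    exact dotProduct_ccone_nonpos hy fun w hw => hu' w hw

lemma snoc_dot {n : ℕ} (a : Fin n → ℝ) (c : ℝ) (y : Fin (n+1) → ℝ) :
    (Fin.snoc a c : Fin (n+1) → ℝ) ⬝ᵥ y = a ⬝ᵥ Fin.init y + c * y (Fin.last n) := by
  simp only [dotProduct, Fin.sum_univ_castSucc, Fin.snoc_castSucc, Fin.snoc_last]
  rfl

lemma dot_snoc {n : ℕ} (u : Fin (n+1) → ℝ) (x : Fin n → ℝ) (t : ℝ) :
    u ⬝ᵥ (Fin.snoc x t : Fin (n+1) → ℝ) = Fin.init u ⬝ᵥ x + u (Fin.last n) * t := by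
  simp only [dotProduct, Fin.sum_univ_castSucc, Fin.snoc_castSucc, Fin.snoc_last]
  rfl

lemma dotProduct_sum' {n : ℕ} {ι : Type*} (x : Fin n → ℝ) (s : Finset ι) (f : ι → Fin n → ℝ) :
    x ⬝ᵥ (∑ i ∈ s, f i) = ∑ i ∈ s, x ⬝ᵥ f i := by
  simp only [dotProduct, Finset.sum_apply, Finset.mul_sum]
  exact Finset.sum_comm

theorem poly_to_sum {n m : ℕ} (A : Matrix (Fin m) (Fin n) ℝ) (b : Fin m → ℝ) :
    ∃ V W : Finset (Fin n → ℝ),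
      {x : Fin n → ℝ | A.mulVec x ≤ b} = convFin V + ccone W := by
  classical
  set Uh : Finset (Fin (n+1) → ℝ) :=
    insert (Fin.snoc (0 : Fin n → ℝ) (-1)) (Finset.univ.image fun i : Fin m => Fin.snoc (A i) (-b i))
    with hUh
  obtain ⟨G, hG⟩ := cone_minkowski Uh
  -- membership in the homogenized cone
  have hmemUh : ∀ y : Fin (n+1) → ℝ, y ∈ polyCone Uh ↔
      (∀ i, A i ⬝ᵥ Fin.init y - b i * y (Fin.last n) ≤ 0) ∧ 0 ≤ y (Fin.last n) := by
    intro y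
    simp only [polyCone, Set.mem_setOf_eq, hUh, Finset.mem_insert, Finset.mem_image,
      Finset.mem_univ, true_and]
    constructor
    · intro h
      refine ⟨fun i => ?_, ?_⟩
      · have := h _ (Or.inr ⟨i, rfl⟩)
        rw [snoc_dot] at this
        linarith
      · have := h _ (Or.inl rfl)
        rw [snoc_dot, zero_dotProduct] at this
        linarith
    · rintro ⟨h1, h2⟩ u hu
      rcases hu with rfl | ⟨i, rfl⟩
      · rw [snoc_dot, zero_dotProduct]; linarith
      · rw [snoc_dot]; linarith [h1 i]
  have hxP : ∀ x : Fin n → ℝ, A.mulVec x ≤ b ↔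
      (Fin.snoc x 1 : Fin (n+1) → ℝ) ∈ polyCone Uh := by
    intro x
    rw [hmemUh]
    simp only [Fin.snoc_last, Fin.init_snoc, mul_one]
    constructor
    · intro h
      exact ⟨fun i => by have := h i; rw [Matrix.mulVec] at this; dsimp at this; linarith,
        by norm_num⟩
    · rintro ⟨h, -⟩ i
      have := h i
      rw [Matrix.mulVec]; dsimp; linarith
  -- every generator has nonneg last coordinate
  have hGlast : ∀ g ∈ G, 0 ≤ g (Fin.last n) := by
    intro g hg
    have : g ∈ polyCone Uh := hG ▸ mem_ccone_of_mem hg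
    exact ((hmemUh g).mp this).2
  set Gp := G.filter (fun g => 0 < g (Fin.last n)) with hGp
  set Gz := G.filter (fun g => ¬ 0 < g (Fin.last n)) with hGz
  refine ⟨Gp.image (fun g => (g (Fin.last n))⁻¹ • Fin.init g), Gz.image Fin.init, ?_⟩
  ext x
  simp only [Set.mem_setOf_eq]
  rw [hxP]
  constructor
  · -- x ∈ P ⟹ decomposition
    intro hx
    rw [hG] at hx
    obtain ⟨lam, hlam, he⟩ := hx
    set φ : (Fin (n+1) → ℝ) → (Fin n → ℝ) := fun g => (g (Fin.last n))⁻¹ • Fin.init g with hφ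
    set l1 : (Fin n → ℝ) → ℝ :=
      fun v => ∑ g ∈ Gp.filter (fun g => φ g = v), lam g * g (Fin.last n) with hl1def
    set l2 : (Fin n → ℝ) → ℝ :=
      fun w => ∑ g ∈ Gz.filter (fun g => Fin.init g = w), lam g with hl2def
    have hzlast : ∀ g ∈ Gz, g (Fin.last n) = 0 := fun g hg =>
      le_antisymm (not_lt.mp (Finset.mem_filter.mp hg).2) (hGlast g (Finset.mem_filter.mp hg).1)
    have hplast : ∀ g ∈ Gp, 0 < g (Fin.last n) := fun g hg => (Finset.mem_filter.mp hg).2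
    -- last coordinate of he
    have hlast : (1:ℝ) = ∑ g ∈ G, lam g * g (Fin.last n) := by
      have := congrFun he (Fin.last n)
      rw [Fin.snoc_last, Finset.sum_apply] at this
      simpa using this
    have hsplitlast : ∑ g ∈ G, lam g * g (Fin.last n)
        = ∑ g ∈ Gp, lam g * g (Fin.last n) + ∑ g ∈ Gz, lam g * g (Fin.last n) :=
      (Finset.sum_filter_add_sum_filter_not G _ _).symm
    have hzzero : ∑ g ∈ Gz, lam g * g (Fin.last n) = 0 :=
      Finset.sum_eq_zero fun g hg => by rw [hzlast g hg, mul_zero]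
    have hsum1 : ∑ g ∈ Gp, lam g * g (Fin.last n) = 1 := by
      rw [hlast, hsplitlast, hzzero, add_zero]
    -- sums over images
    have hA : ∑ v ∈ Gp.image φ, l1 v • v = ∑ g ∈ Gp, lam g • Fin.init g := by
      rw [← Finset.sum_fiberwise_of_maps_to (fun g hg => Finset.mem_image_of_mem φ hg)
        (fun g => lam g • Fin.init g)]
      refine Finset.sum_congr rfl fun v hv => ?_
      rw [hl1def]
      dsimp only
      rw [Finset.sum_smul]
      refine Finset.sum_congr rfl fun g hg => ?_
      obtain ⟨hgp, hfv⟩ := Finset.mem_filter.mp hg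
      have hpos := hplast g hgp
      rw [← hfv, hφ]
      dsimp only
      rw [smul_smul, mul_assoc, mul_inv_cancel₀ hpos.ne', mul_one]
    have hsumA : ∑ v ∈ Gp.image φ, l1 v = 1 := by
      rw [hl1def, Finset.sum_fiberwise_of_maps_to (fun g hg => Finset.mem_image_of_mem φ hg)]
      exact hsum1
    have hB : ∑ w ∈ Gz.image Fin.init, l2 w • w = ∑ g ∈ Gz, lam g • Fin.init g := by
      rw [← Finset.sum_fiberwise_of_maps_to (fun g hg => Finset.mem_image_of_mem Fin.init hg)
        (fun g => lam g • Fin.init g)]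
      refine Finset.sum_congr rfl fun w hw => ?_
      rw [hl2def]
      dsimp only
      rw [Finset.sum_smul]
      exact Finset.sum_congr rfl fun g hg => by rw [(Finset.mem_filter.mp hg).2]
    -- initial part of he
    have hinit : x = ∑ g ∈ G, lam g • Fin.init g := by
      funext j
      have := congrFun he (Fin.castSucc j)
      rw [Fin.snoc_castSucc, Finset.sum_apply] at this
      rw [Finset.sum_apply]
      simpa [Fin.init] using this
    have hsplit : ∑ g ∈ G, lam g • Fin.init g
        = ∑ g ∈ Gp, lam g • Fin.init g + ∑ g ∈ Gz, lam g • Fin.init g :=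
      (Finset.sum_filter_add_sum_filter_not G _ _).symm
    rw [Set.mem_add]
    refine ⟨∑ v ∈ Gp.image φ, l1 v • v, ⟨l1, fun v hv => ?_, hsumA, rfl⟩,
      ∑ w ∈ Gz.image Fin.init, l2 w • w, ⟨l2, fun w hw => ?_, rfl⟩, ?_⟩
    · rw [hl1def]
      exact Finset.sum_nonneg fun g hg => mul_nonneg
        (hlam g (Finset.mem_filter.mp ((Finset.mem_filter.mp hg).1)).1)
        (hplast g (Finset.mem_filter.mp hg).1).le
    · rw [hl2def]
      exact Finset.sum_nonneg fun g hg =>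
        hlam g (Finset.mem_filter.mp ((Finset.mem_filter.mp hg).1)).1
    · rw [hA, hB, ← hsplit, ← hinit]
  · -- decomposition ⟹ x ∈ P
    rintro hmem
    rw [Set.mem_add] at hmem
    obtain ⟨a, ha, bb, hbb, rfl⟩ := hmem
    obtain ⟨l1, hl1, hs1, rfl⟩ := ha
    obtain ⟨l2, hl2, rfl⟩ := hbb
    rw [hmemUh]
    simp only [Fin.snoc_last, Fin.init_snoc, mul_one]
    refine ⟨fun i => ?_, by norm_num⟩
    have hv : ∀ v ∈ Gp.image (fun g => (g (Fin.last n))⁻¹ • Fin.init g), A i ⬝ᵥ v ≤ b i := by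
      intro v hv
      obtain ⟨g, hg, rfl⟩ := Finset.mem_image.mp hv
      obtain ⟨hgG, hgpos⟩ := Finset.mem_filter.mp hg
      have hgc : g ∈ polyCone Uh := hG ▸ mem_ccone_of_mem hgG
      have := ((hmemUh g).mp hgc).1 i
      rw [dotProduct_smul, smul_eq_mul]
      rw [inv_mul_le_iff₀ hgpos]
      nlinarith
    have hw : ∀ w ∈ Gz.image Fin.init, A i ⬝ᵥ w ≤ 0 := by
      intro w hw
      obtain ⟨g, hg, rfl⟩ := Finset.mem_image.mp hw
      obtain ⟨hgG, hgnpos⟩ := Finset.mem_filter.mp hg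
      have hgc : g ∈ polyCone Uh := hG ▸ mem_ccone_of_mem hgG
      have h0 : g (Fin.last n) = 0 := le_antisymm (not_lt.mp hgnpos) (hGlast g hgG)
      have := ((hmemUh g).mp hgc).1 i
      rw [h0] at this
      linarith
    rw [dotProduct_add]
    have e1 : A i ⬝ᵥ ∑ v ∈ Gp.image (fun g => (g (Fin.last n))⁻¹ • Fin.init g), l1 v • v
        ≤ ∑ v ∈ Gp.image (fun g => (g (Fin.last n))⁻¹ • Fin.init g), l1 v * b i := by
      rw [dotProduct_sum']
      refine Finset.sum_le_sum fun v hvm => ?_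
      rw [dotProduct_smul, smul_eq_mul]
      exact mul_le_mul_of_nonneg_left (hv v hvm) (hl1 v hvm)
    have e2 : A i ⬝ᵥ ∑ w ∈ Gz.image Fin.init, l2 w • w ≤ 0 := by
      rw [dotProduct_sum']
      refine Finset.sum_nonpos fun w hwm => ?_
      rw [dotProduct_smul, smul_eq_mul]
      exact mul_nonpos_of_nonneg_of_nonpos (hl2 w hwm) (hw w hwm)
    have e3 : ∑ v ∈ Gp.image (fun g => (g (Fin.last n))⁻¹ • Fin.init g), l1 v * b i = b i := by
      rw [← Finset.sum_mul, hs1, one_mul]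
    linarith

theorem sum_to_poly {n : ℕ} (V W : Finset (Fin n → ℝ)) :
    ∃ (m : ℕ) (A : Matrix (Fin m) (Fin n) ℝ) (b : Fin m → ℝ),
      convFin V + ccone W = {x : Fin n → ℝ | A.mulVec x ≤ b} := by
  classical
  set f1 : (Fin n → ℝ) → (Fin (n+1) → ℝ) := fun v => Fin.snoc v 1 with hf1
  set f2 : (Fin n → ℝ) → (Fin (n+1) → ℝ) := fun w => Fin.snoc w 0 with hf2
  have hinj1 : ∀ v1 v2 : Fin n → ℝ, f1 v1 = f1 v2 → v1 = v2 := by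
    intro v1 v2 h
    have := congrArg Fin.init h
    simpa [hf1, Fin.init_snoc] using this
  have hinj2 : ∀ w1 w2 : Fin n → ℝ, f2 w1 = f2 w2 → w1 = w2 := by
    intro w1 w2 h
    have := congrArg Fin.init h
    simpa [hf2, Fin.init_snoc] using this
  set G : Finset (Fin (n+1) → ℝ) := V.image f1 ∪ W.image f2 with hGdef
  have hdisj : Disjoint (V.image f1) (W.image f2) := by
    rw [Finset.disjoint_left]
    rintro g hg1 hg2
    obtain ⟨v, -, rfl⟩ := Finset.mem_image.mp hg1
    obtain ⟨w, -, hw⟩ := Finset.mem_image.mp hg2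
    have := congrFun hw (Fin.last n)
    simp [hf1, hf2, Fin.snoc_last] at this
  obtain ⟨U, hU⟩ := cone_weyl G
  -- key: x ∈ convFin V + ccone W ↔ snoc x 1 ∈ ccone G
  have hkey : ∀ x : Fin n → ℝ,
      x ∈ convFin V + ccone W ↔ (Fin.snoc x 1 : Fin (n+1) → ℝ) ∈ ccone G := by
    intro x
    constructor
    · rintro hmem
      rw [Set.mem_add] at hmem
      obtain ⟨a, ⟨l1, hl1, hs1, rfl⟩, bb, ⟨l2, hl2, rfl⟩, hab⟩ := hmem
      have heq : (Fin.snoc x 1 : Fin (n+1) → ℝ) =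
          (∑ v ∈ V, l1 v • f1 v) + ∑ w ∈ W, l2 w • f2 w := by
        funext j
        refine Fin.lastCases ?_ (fun j => ?_) j
        · rw [Fin.snoc_last, Pi.add_apply, Finset.sum_apply, Finset.sum_apply]
          simp only [Pi.smul_apply, smul_eq_mul, hf1, hf2, Fin.snoc_last, mul_one, mul_zero,
            Finset.sum_const_zero, add_zero, hs1]
        · rw [Fin.snoc_castSucc, Pi.add_apply, Finset.sum_apply, Finset.sum_apply]
          simp only [Pi.smul_apply, smul_eq_mul, hf1, hf2, Fin.snoc_castSucc]
          have := congrFun hab j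
          rw [Pi.add_apply, Finset.sum_apply, Finset.sum_apply] at this
          simpa using this.symm
      rw [heq]
      refine ccone_add_mem
        (ccone_sum_smul_mem hl1 fun v hv => mem_ccone_of_mem
          (Finset.mem_union_left _ (Finset.mem_image_of_mem f1 hv)))
        (ccone_sum_smul_mem hl2 fun w hw => mem_ccone_of_mem
          (Finset.mem_union_right _ (Finset.mem_image_of_mem f2 hw)))
    · rintro ⟨lam, hlam, he⟩
      rw [hGdef, Finset.sum_union hdisj, Finset.sum_image (fun a ha b hb => hinj1 a b),
        Finset.sum_image (fun a ha b hb => hinj2 a b)] at he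
      have hlam1 : ∀ v ∈ V, 0 ≤ lam (f1 v) := fun v hv =>
        hlam _ (Finset.mem_union_left _ (Finset.mem_image_of_mem f1 hv))
      have hlam2 : ∀ w ∈ W, 0 ≤ lam (f2 w) := fun w hw =>
        hlam _ (Finset.mem_union_right _ (Finset.mem_image_of_mem f2 hw))
      have hlast : (1:ℝ) = ∑ v ∈ V, lam (f1 v) := by
        have := congrFun he (Fin.last n)
        rw [Fin.snoc_last, Pi.add_apply, Finset.sum_apply, Finset.sum_apply] at this
        simp only [Pi.smul_apply, smul_eq_mul, hf1, hf2, Fin.snoc_last, mul_one, mul_zero,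
          Finset.sum_const_zero, add_zero] at this
        exact this
      have hinitx : x = ∑ v ∈ V, lam (f1 v) • v + ∑ w ∈ W, lam (f2 w) • w := by
        funext j
        have := congrFun he (Fin.castSucc j)
        rw [Fin.snoc_castSucc, Pi.add_apply, Finset.sum_apply, Finset.sum_apply] at this
        simp only [Pi.smul_apply, smul_eq_mul, hf1, hf2, Fin.snoc_castSucc] at this
        rw [Pi.add_apply, Finset.sum_apply, Finset.sum_apply]
        simpa using this
      rw [Set.mem_add]
      exact ⟨∑ v ∈ V, lam (f1 v) • v, ⟨fun v => lam (f1 v), hlam1, hlast.symm, rfl⟩,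
        ∑ w ∈ W, lam (f2 w) • w, ⟨fun w => lam (f2 w), hlam2, rfl⟩, hinitx.symm⟩
  -- convert polyCone U membership of snoc x 1 to matrix inequalities
  refine ⟨U.card, Matrix.of (fun i => Fin.init ((U.equivFin.symm i) : Fin (n+1) → ℝ)),
    fun i => -((U.equivFin.symm i) : Fin (n+1) → ℝ) (Fin.last n), ?_⟩
  ext x
  rw [Set.mem_setOf_eq, hkey x, hU]
  constructor
  · intro h i
    have := h _ (U.equivFin.symm i).2
    rw [dot_snoc, mul_one] at this
    rw [Matrix.mulVec]
    dsimp
    linarith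
  · intro h u hu
    have h2 : Fin.init u ⬝ᵥ x ≤ -u (Fin.last n) := by
      simpa [Matrix.mulVec] using h (U.equivFin ⟨u, hu⟩)
    rw [dot_snoc, mul_one]
    linarith

/-- Weyl–Minkowski theorem: `P ⊆ ℝ^n` is a polyhedron (`P = {x : Ax ≤ b}` for some
matrix `A` and vector `b`) if and only if `P` is the Minkowski sum of a polytope and a
finitely generated cone. -/
theorem weyl_minkowski {n : ℕ} (P : Set (Fin n → ℝ)) :
    (∃ (m : ℕ) (A : Matrix (Fin m) (Fin n) ℝ) (b : Fin m → ℝ),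
        P = {x : Fin n → ℝ | A.mulVec x ≤ b}) ↔
      (∃ V W : Finset (Fin n → ℝ), P = convFin V + ccone W) := by
  constructor
  · rintro ⟨m, A, b, rfl⟩
    exact poly_to_sum A b
  · rintro ⟨V, W, rfl⟩
    obtain ⟨m, A, b, h⟩ := sum_to_poly V W
    exact ⟨m, A, b, h⟩
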